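/- arXiv:2104.01453 — 5 statements merged into one kernel-verified Lean document; each statement's English description precedes it below -/
import Mathlib

section
/- Let f(x) be a nonconstant polynomial with integer coefficients, let k ≥ 2 and c be integers. Then for every positive integer n, 𝒩_{k,f,c}(n) = n^{k-1} · ∏_{p | n} (1 − 𝓜_{k,f,c}(p)/p^{k-1}), where the product runs over all prime divisors p of n. -/
open Polynomial

/-- `Ncount k f c n` is the number of tuples `(x_1,...,x_k) ∈ {0,...,n-1}^k` with
`gcd(f(x_i), n) = 1` for all `i` and `x_1 + ... + x_k ≡ c (mod n)`. -/
noncomputable def Ncount (k : ℕ) (f : Polynomial ℤ) (c : ℤ) (n : ℕ) : ℕ :=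
  Nat.card {x : Fin k → ℤ //
    (∀ i, 0 ≤ x i ∧ x i < n) ∧
    (∀ i, Int.gcd (f.eval (x i)) n = 1) ∧
    (n : ℤ) ∣ (∑ i, x i) - c}

/-- `Mcount k f c p` is the number of tuples `(x_1,...,x_{k-1}) ∈ {0,...,p-1}^{k-1}` with
`f(x_1) ⋯ f(x_{k-1}) · f(c - x_1 - ... - x_{k-1}) ≡ 0 (mod p)`. -/
noncomputable def Mcount (k : ℕ) (f : Polynomial ℤ) (c : ℤ) (p : ℕ) : ℕ :=
  Nat.card {x : Fin (k - 1) → ℤ //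
    (∀ i, 0 ≤ x i ∧ x i < p) ∧
    (p : ℤ) ∣ (∏ i, f.eval (x i)) * f.eval (c - ∑ i, x i)}

/-!
Reducing modulo `n` identifies `Ncount k f c n` with the number of `k`-tuples of `f`-exunits of
`ℤ/n` summing to `c`. This ring-theoretic count is multiplicative in the ring, so by the Chinese
remainder theorem it is multiplicative in `n`. Over `ℤ/p^α` the reduction to `ℤ/p` is a local
homomorphism, so being an `f`-exunit only depends on the residue mod `p`; since the last coordinate
is determined by the others, the count is `p^((α-1)(k-1))` times the number of `(k-1)`-tuples over
`ℤ/p` with `f(x_1) ⋯ f(x_{k-1}) f(c - ∑ x_i) ≠ 0`, which is `p^(k-1) - Mcount k f c p`.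
-/

theorem AddMonoidHom.card_subtype_comp_mul_card {A B : Type*} [AddGroup A] [AddGroup B]
    [Fintype A] [Fintype B] (g : A →+ B) (hg : Function.Surjective g) (P : B → Prop) :
    Nat.card {a // P (g a)} * Nat.card B = Nat.card A * Nat.card {b // P b} := by
  classical
  set d := Nat.card {a // g a = 0}
  have hfiber (b : B) : Nat.card {a // g a = b} = d := by
    simp only [d, Nat.card_eq_fintype_card, Fintype.card_subtype]
    exact AddMonoidHom.card_fiber_eq_of_mem_range g (hg b) (hg 0)
  have hpre : Nat.card {a // P (g a)} = Nat.card {b // P b} * d := by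
    rw [← Nat.card_congr (Equiv.sigmaSubtypeFiberEquivSubtype g fun _ => Iff.rfl),
      Nat.card_sigma]
    simp only [hfiber, Finset.sum_const, smul_eq_mul, Finset.card_univ, Nat.card_eq_fintype_card]
  have htotal : Nat.card A = Nat.card B * d := by
    rw [← Nat.card_congr (Equiv.sigmaFiberEquiv g), Nat.card_sigma]
    simp only [hfiber, Finset.sum_const, smul_eq_mul, Finset.card_univ, Nat.card_eq_fintype_card]
  rw [hpre, htotal]
  ring

theorem Polynomial.aeval_intCast {R : Type*} [CommRing R] (f : ℤ[X]) (a : ℤ) :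
    aeval (a : R) f = ((f.eval a : ℤ) : R) := by
  rw [aeval_def, eval₂_at_intCast, algebraMap_int_eq, eq_intCast, Int.cast_id]

theorem ZMod.isLocalHom_castHom_pow (p : ℕ) {α : ℕ} (hα : α ≠ 0) :
    IsLocalHom (ZMod.castHom (dvd_pow_self p hα) (ZMod p)) := by
  refine ⟨fun u hu => ?_⟩
  obtain ⟨a, rfl⟩ := ZMod.intCast_surjective u
  rw [map_intCast, ZMod.coe_int_isUnit_iff_isCoprime] at hu
  rw [ZMod.coe_int_isUnit_iff_isCoprime, Nat.cast_pow]
  exact hu.pow_left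

theorem ZMod.card_intTuple_subtype (n m : ℕ) [NeZero n] (P : (Fin m → ZMod n) → Prop) :
    Nat.card {x : Fin m → ℤ // (∀ i, 0 ≤ x i ∧ x i < n) ∧ P (fun i => x i)} =
      Nat.card {y // P y} := by
  have hval (a : ℤ) (ha : 0 ≤ a ∧ a < n) : ((a : ZMod n).val : ℤ) = a := by
    rw [ZMod.val_intCast, Int.emod_eq_of_lt ha.1 ha.2]
  have hcast (y : Fin m → ZMod n) : (fun i => (((y i).val : ℤ) : ZMod n)) = y := by
    simp
  refine Nat.card_congr
    { toFun x := ⟨fun i => x.1 i, x.2.2⟩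
      invFun y := ⟨fun i => ((y.1 i).val : ℤ),
        fun i => ⟨by positivity, Int.ofNat_lt.mpr (y.1 i).val_lt⟩, by rw [hcast]; exact y.2⟩
      left_inv x := Subtype.ext (funext fun i => hval _ (x.2.1 i))
      right_inv y := Subtype.ext (hcast y.1) }

section ExunitSums

variable (f : ℤ[X]) (c : ℤ)

noncomputable def exunitSumCount (k : ℕ) (R : Type*) [CommRing R] : ℕ :=
  Nat.card {x : Fin k → R // (∀ i, IsUnit (aeval (x i) f)) ∧ ∑ i, x i = c}

/-- `y` extends, necessarily by `c - ∑ i, y i`, to a tuple of `f`-exunits summing to `c`. -/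
def IsExunitPrefix {R : Type*} [CommRing R] {m : ℕ} (y : Fin m → R) : Prop :=
  (∀ i, IsUnit (aeval (y i) f)) ∧ IsUnit (aeval (c - ∑ i, y i) f)

variable {f c}

theorem Polynomial.aeval_ringHom_apply {R S F : Type*} [CommRing R] [CommRing S] [FunLike F R S]
    [RingHomClass F R S] (g : F) (x : R) : aeval (g x) f = g (aeval x f) :=
  aeval_algHom_apply (g : R →+* S).toIntAlgHom x f

theorem isUnit_aeval_map_iff {R S F : Type*} [CommRing R] [CommRing S] [FunLike F R S]
    [RingHomClass F R S] (g : F) [IsLocalHom g] (x : R) :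
    IsUnit (aeval (g x) f) ↔ IsUnit (aeval x f) := by
  rw [aeval_ringHom_apply, isUnit_map_iff]

theorem isExunitPrefix_comp_iff {R S : Type*} [CommRing R] [CommRing S] (g : R →+* S)
    [IsLocalHom g] {m : ℕ} (y : Fin m → R) :
    IsExunitPrefix f c (g ∘ y) ↔ IsExunitPrefix f c y := by
  have hlast : (c : S) - ∑ i, g (y i) = g (c - ∑ i, y i) := by
    rw [map_sub, map_intCast, map_sum]
  simp only [IsExunitPrefix, Function.comp_apply, hlast, isUnit_aeval_map_iff]

theorem isExunitPrefix_iff_isUnit {R : Type*} [CommRing R] {m : ℕ} (y : Fin m → R) :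
    IsExunitPrefix f c y ↔ IsUnit ((∏ i, aeval (y i) f) * aeval (c - ∑ i, y i) f) := by
  rw [IsUnit.mul_iff, IsUnit.prod_univ_iff, IsExunitPrefix]

variable (f c)

theorem exunitSumCount_succ (m : ℕ) (R : Type*) [CommRing R] :
    exunitSumCount f c (m + 1) R = Nat.card {y : Fin m → R // IsExunitPrefix f c y} := by
  have hlast (x : Fin (m + 1) → R) (hx : ∑ i, x i = c) :
      x (Fin.last m) = c - ∑ i, Fin.init x i := by
    rw [← hx, Fin.sum_univ_castSucc]
    simp [Fin.init]
  refine Nat.card_congr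
    { toFun x := ⟨Fin.init x.1, fun i => x.2.1 i.castSucc,
        hlast x.1 x.2.2 ▸ x.2.1 (Fin.last m)⟩
      invFun y := ⟨Fin.snoc y.1 (c - ∑ i, y.1 i), ?_, ?_⟩
      left_inv x := Subtype.ext ?_
      right_inv y := by ext1; simp }
  · intro i
    refine Fin.lastCases ?_ (fun j => ?_) i
    · simpa using y.2.2
    · simpa using y.2.1 j
  · simp [Fin.sum_univ_castSucc]
  · simp only
    rw [← hlast x.1 x.2.2, Fin.snoc_init_self]

theorem exunitSumCount_congr (k : ℕ) {R S : Type*} [CommRing R] [CommRing S] (e : R ≃+* S) :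
    exunitSumCount f c k R = exunitSumCount f c k S := by
  refine Nat.card_congr (Equiv.subtypeEquiv (Equiv.piCongrRight fun _ => e.toEquiv) fun x => ?_)
  simp only [Equiv.piCongrRight_apply, RingEquiv.toEquiv_eq_coe, EquivLike.coe_coe, Pi.map_apply,
    isUnit_aeval_map_iff, ← map_sum, ← map_intCast e, e.injective.eq_iff]

theorem exunitSumCount_prod (k : ℕ) (R S : Type*) [CommRing R] [CommRing S] :
    exunitSumCount f c k (R × S) = exunitSumCount f c k R * exunitSumCount f c k S := by
  rw [exunitSumCount, exunitSumCount, exunitSumCount, ← Nat.card_prod]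
  refine Nat.card_congr
    ((Equiv.subtypeEquiv (Equiv.arrowProdEquivProdArrow _ _ _) fun x => ?_).trans
      Equiv.subtypeProdEquivProd)
  -- Stated through `RingHom.fst`/`RingHom.snd` so that `aeval` on `R × S` keeps the `ℤ`-algebra
  -- instance of `exunitSumCount` rather than `Prod.algebra`.
  have hfst (z : R × S) := (aeval_ringHom_apply (f := f) (RingHom.fst R S) z).symm
  have hsnd (z : R × S) := (aeval_ringHom_apply (f := f) (RingHom.snd R S) z).symm
  simp only [RingHom.coe_fst, RingHom.coe_snd] at hfst hsnd
  simp only [Equiv.arrowProdEquivProdArrow_apply, Prod.isUnit_iff, hfst, hsnd, Prod.ext_iff,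
    Prod.fst_sum, Prod.snd_sum, Prod.fst_intCast, Prod.snd_intCast, forall_and]
  tauto

theorem exunitSumCount_of_subsingleton (k : ℕ) (R : Type*) [CommRing R] [Subsingleton R] :
    exunitSumCount f c k R = 1 :=
  Nat.card_eq_one_iff_unique.mpr
    ⟨inferInstance, ⟨⟨0, fun _ => isUnit_of_subsingleton _, Subsingleton.elim _ _⟩⟩⟩


theorem Ncount_eq_exunitSumCount (k : ℕ) {n : ℕ} (hn : n ≠ 0) :
    Ncount k f c n = exunitSumCount f c k (ZMod n) := by
  have : NeZero n := ⟨hn⟩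
  rw [exunitSumCount, ← ZMod.card_intTuple_subtype]
  refine Nat.card_congr (Equiv.subtypeEquivRight fun x => and_congr_right fun _ => ?_)
  simp only [aeval_intCast, ZMod.coe_int_isUnit_iff_isCoprime, isCoprime_comm (x := (n : ℤ)),
    Int.isCoprime_iff_gcd_eq_one, ← Int.cast_sum, eq_comm (a := ((∑ i, x i : ℤ) : ZMod n)),
    ZMod.intCast_eq_intCast_iff_dvd_sub]

theorem Mcount_eq_card_not_isExunitPrefix {p : ℕ} (hp : p.Prime) (m : ℕ) :
    Mcount (m + 1) f c p = Nat.card {y : Fin m → ZMod p // ¬ IsExunitPrefix f c y} := by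
  have := Fact.mk hp
  rw [Mcount, Nat.add_sub_cancel, ← ZMod.card_intTuple_subtype]
  refine Nat.card_congr (Equiv.subtypeEquivRight fun x => and_congr_right fun _ => ?_)
  rw [isExunitPrefix_iff_isUnit, isUnit_iff_ne_zero, not_not, ← ZMod.intCast_zmod_eq_zero_iff_dvd]
  simp only [← Int.cast_sum, ← Int.cast_sub, aeval_intCast, Int.cast_prod, Int.cast_mul]

theorem card_isExunitPrefix_add_Mcount {p : ℕ} (hp : p.Prime) (m : ℕ) :
    Nat.card {y : Fin m → ZMod p // IsExunitPrefix f c y} + Mcount (m + 1) f c p = p ^ m := by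
  classical
  have : NeZero p := ⟨hp.ne_zero⟩
  rw [Mcount_eq_card_not_isExunitPrefix f c hp, ← Nat.card_sum,
    Nat.card_congr (Equiv.sumCompl _), Nat.card_fun, Nat.card_zmod, Nat.card_fin]

theorem exunitSumCount_zmod_prime_pow_mul (p : ℕ) [NeZero p] {α : ℕ}
    (hα : α ≠ 0) (m : ℕ) :
    exunitSumCount f c (m + 1) (ZMod (p ^ α)) * p ^ m =
      (p ^ α) ^ m * Nat.card {y : Fin m → ZMod p // IsExunitPrefix f c y} := by
  have := ZMod.isLocalHom_castHom_pow p hα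
  set π := ZMod.castHom (dvd_pow_self p hα) (ZMod p)
  have key : Nat.card {y : Fin m → ZMod (p ^ α) // IsExunitPrefix f c (π ∘ y)} *
      Nat.card (Fin m → ZMod p) = Nat.card (Fin m → ZMod (p ^ α)) *
        Nat.card {z : Fin m → ZMod p // IsExunitPrefix f c z} :=
    AddMonoidHom.card_subtype_comp_mul_card ((π : ZMod (p ^ α) →+ ZMod p).compLeft (Fin m))
      (ZMod.castHom_surjective (dvd_pow_self p hα)).comp_left _
  simp only [isExunitPrefix_comp_iff, Nat.card_fun, Nat.card_zmod, Nat.card_fin] at key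
  rw [exunitSumCount_succ, key]

theorem Ncount_mul (k : ℕ) {a b : ℕ} (hab : a.Coprime b) (ha : a ≠ 0)
    (hb : b ≠ 0) : Ncount k f c (a * b) = Ncount k f c a * Ncount k f c b := by
  rw [Ncount_eq_exunitSumCount f c k (mul_ne_zero ha hb), Ncount_eq_exunitSumCount f c k ha,
    Ncount_eq_exunitSumCount f c k hb, exunitSumCount_congr f c k (ZMod.chineseRemainder hab),
    exunitSumCount_prod]

theorem Ncount_prime_pow {p α : ℕ} (hp : p.Prime) (hα : α ≠ 0) (m : ℕ) :
    (Ncount (m + 1) f c (p ^ α) : ℚ) =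
      ((p ^ α : ℕ) : ℚ) ^ m * (1 - (Mcount (m + 1) f c p : ℚ) / (p : ℚ) ^ m) := by
  have : NeZero p := ⟨hp.ne_zero⟩
  have hcount := exunitSumCount_zmod_prime_pow_mul f c p hα m
  have hsplit := card_isExunitPrefix_add_Mcount f c hp m
  rw [← Ncount_eq_exunitSumCount f c _ (pow_ne_zero α hp.ne_zero)] at hcount
  have hcountℚ : (Ncount (m + 1) f c (p ^ α) : ℚ) * p ^ m =
      ((p ^ α : ℕ) : ℚ) ^ m * Nat.card {y : Fin m → ZMod p // IsExunitPrefix f c y} := by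
    exact_mod_cast hcount
  have hsplitℚ : (Nat.card {y : Fin m → ZMod p // IsExunitPrefix f c y} : ℚ) +
      Mcount (m + 1) f c p = (p : ℚ) ^ m := by
    exact_mod_cast hsplit
  have hpm : (p : ℚ) ^ m ≠ 0 := pow_ne_zero m (Nat.cast_ne_zero.mpr hp.ne_zero)
  field_simp
  linear_combination hcountℚ + ((p ^ α : ℕ) : ℚ) ^ m * hsplitℚ

end ExunitSums

theorem Ncount_formula_general (f : Polynomial ℤ)
    (k : ℕ) (hk : 2 ≤ k) (c : ℤ) (n : ℕ) (hn : 0 < n) :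
    (Ncount k f c n : ℚ) =
      (n : ℚ) ^ (k - 1) *
        ∏ p ∈ n.primeFactors, (1 - (Mcount k f c p : ℚ) / (p : ℚ) ^ (k - 1)) := by
  obtain ⟨m, rfl⟩ : ∃ m, k = m + 1 := ⟨k - 1, by omega⟩
  rw [Nat.add_sub_cancel]
  induction n using Nat.recOnPosPrimePosCoprime with
  | zero => exact absurd hn (lt_irrefl 0)
  | one => simp [Ncount_eq_exunitSumCount f c _ one_ne_zero, exunitSumCount_of_subsingleton]
  | prime_pow p α hp hα =>
    rw [Ncount_prime_pow f c hp hα.ne', Nat.primeFactors_prime_pow hα.ne' hp,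
      Finset.prod_singleton]
  | coprime a b ha hb hab iha ihb =>
    rw [Ncount_mul f c _ hab (by omega) (by omega), Nat.cast_mul, iha (by omega), ihb (by omega),
      Nat.Coprime.primeFactors_mul hab, Finset.prod_union hab.disjoint_primeFactors]
    push_cast
    ring

theorem Ncount_formula (f : Polynomial ℤ) (hf : 1 ≤ f.natDegree)
    (k : ℕ) (hk : 2 ≤ k) (c : ℤ) (n : ℕ) (hn : 0 < n) :
    (Ncount k f c n : ℚ) =
      (n : ℚ) ^ (k - 1) *
        ∏ p ∈ n.primeFactors, (1 - (Mcount k f c p : ℚ) / (p : ℚ) ^ (k - 1)) :=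
  Ncount_formula_general f k hk c n hn
end

section
/- Let c and n be integers with n ≥ 1, let k ≥ 2 be an integer, and let f(x) = ax + b ∈ ℤ[x] with gcd(a, n) = 1. Then 𝒩_{k,f,c}(n) = n^{k-1} · ∏_{p | n} ((p−1)^k + (−1)^k δ_p)/p^k, where the product is over prime divisors p of n, and δ_p = p − 1 if p divides ac + kb, and δ_p = −1 otherwise. -/
/-!
Substituting `y = a x + b` turns `Ncount` into the number of `k`-tuples of units of `ℤ/n`
summing to `m = a c + k b`. By the Chinese remainder theorem this count is multiplicative in `n`,
so it suffices to treat `ℤ/p^e`, a finite local ring. In a finite local ring with `U` units and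
`M` nonunits, splitting off the first summand gives a recursion that only sees whether the target
is a unit, because for a unit `m` the units `u` with `m - u` a nonunit form the coset `m + 𝔪`,
and for a nonunit `m` there are none. Its solution is `(U + M) · count = U^k - (-M)^k` for a unit
target and `U (U^(k-1) - (-M)^(k-1))` otherwise; for `ℤ/p^e`, `U = p^(e-1) (p-1)` and
`M = p^(e-1)`, which is the local factor of the formula.
-/

open Polynomial

section UnitSumCount

variable (R : Type*) [Ring R]

noncomputable def unitSumCount (k : ℕ) (m : R) : ℕ :=
  Nat.card {u : Fin k → Rˣ // ∑ i, (u i : R) = m}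

variable {R}

theorem unitSumCount_one [DecidablePred (IsUnit : R → Prop)] (m : R) :
    unitSumCount R 1 m = if IsUnit m then 1 else 0 := by
  have e : {v : Fin 1 → Rˣ // ∑ i, (v i : R) = m} ≃ {u : Rˣ // (u : R) = m} :=
    (Equiv.funUnique (Fin 1) Rˣ).subtypeEquiv fun v => by simp
  rw [unitSumCount, Nat.card_congr e]
  split_ifs with hm
  · have : Unique {u : Rˣ // (u : R) = m} :=
      ⟨⟨⟨hm.unit, rfl⟩⟩, fun u => Subtype.ext (Units.ext (u.2.trans hm.unit_spec.symm))⟩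
    exact Nat.card_unique
  · have : IsEmpty {u : Rˣ // (u : R) = m} := ⟨fun u => hm (u.2 ▸ u.1.isUnit)⟩
    exact Nat.card_of_isEmpty

theorem unitSumCount_succ [Fintype Rˣ] (k : ℕ) (m : R) :
    unitSumCount R (k + 1) m = ∑ u : Rˣ, unitSumCount R k (m - u) := by
  have e : {v : Fin (k + 1) → Rˣ // ∑ i, (v i : R) = m} ≃
      Σ u : Rˣ, {v : Fin k → Rˣ // ∑ i, (v i : R) = m - u} :=
    ((Fin.consEquiv fun _ => Rˣ).symm.subtypeEquiv
      (q := fun p => ∑ i, (p.2 i : R) = m - p.1) fun v => by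
        simp [Fin.sum_univ_succ, eq_sub_iff_add_eq', Fin.tail]).trans
      (Equiv.subtypeProdEquivSigmaSubtype
        fun (u : Rˣ) (v : Fin k → Rˣ) => ∑ i, (v i : R) = m - u)
  rw [unitSumCount, Nat.card_congr e, Nat.card_sigma]
  rfl

theorem unitSumCount_congr {S : Type*} [Ring S] (e : R ≃+* S) (k : ℕ) (m : R) :
    unitSumCount S k (e m) = unitSumCount R k m := by
  refine Nat.card_congr ((Equiv.piCongrRight fun _ =>
    (Units.mapEquiv e.toMulEquiv).toEquiv).symm.subtypeEquiv fun v => ?_)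
  rw [← e.symm.injective.eq_iff]
  simp [map_sum]

theorem unitSumCount_prod {S : Type*} [Ring S] (k : ℕ) (r : R) (s : S) :
    unitSumCount (R × S) k (r, s) = unitSumCount R k r * unitSumCount S k s := by
  let e : (Fin k → (R × S)ˣ) ≃ (Fin k → Rˣ) × (Fin k → Sˣ) :=
    (Equiv.piCongrRight fun _ => MulEquiv.prodUnits.toEquiv).trans
      (Equiv.arrowProdEquivProdArrow _ _ _)
  rw [unitSumCount, unitSumCount, unitSumCount, ← Nat.card_prod]
  refine Nat.card_congr ((e.subtypeEquiv fun v => ?_).trans Equiv.subtypeProdEquivProd)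
  simp only [Prod.ext_iff, Prod.fst_sum, Prod.snd_sum]
  rfl

theorem unitSumCount_of_subsingleton [Subsingleton R] (k : ℕ) (m : R) : unitSumCount R k m = 1 :=
  Nat.card_eq_one_iff_unique.2 ⟨inferInstance, ⟨fun _ => 1, Subsingleton.elim _ _⟩⟩

open Finset in
theorem card_affine_isUnit_sum_eq_unitSumCount (a : Rˣ) (b c : R) (k : ℕ) :
    Nat.card {y : Fin k → R // (∀ i, IsUnit (a * y i + b)) ∧ ∑ i, y i = c} =
      unitSumCount R k (a * c + k * b) :=
  Nat.card_congr
    { toFun := fun y => ⟨fun i => (y.2.1 i).unit, by simp [sum_add_distrib, ← mul_sum, y.2.2]⟩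
      invFun := fun u => ⟨fun i => ↑a⁻¹ * (u.1 i - b), fun i => by simp [← mul_assoc],
        by simp [← mul_sum, sum_sub_distrib, u.2, ← mul_assoc]⟩
      left_inv := fun y => Subtype.ext (funext fun i => by simp [← mul_assoc])
      right_inv := fun u => Subtype.ext (funext fun i => Units.ext (by simp [← mul_assoc])) }

end UnitSumCount

theorem Nat.card_units_add_card_nonunits (M : Type*) [Monoid M] [Finite M] :
    Nat.card Mˣ + Nat.card (nonunits M) = Nat.card M := by
  classical
  have e : Mˣ ≃ {x : M // IsUnit x} :=
    ⟨fun u => ⟨u, u.isUnit⟩, fun x => x.2.unit, fun _ => Units.ext rfl, fun _ => rfl⟩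
  rw [Nat.card_congr e, ← Nat.card_sum]
  exact Nat.card_congr (Equiv.sumCompl fun x : M => IsUnit x)

theorem sum_ite_eq_card_mul_add_card_not_mul {α β : Type*} [Fintype α] [CommRing β]
    (p : α → Prop) [DecidablePred p] (A B : β) :
    ∑ x, (if p x then A else B) = Nat.card α * A + Nat.card {x // ¬p x} * (B - A) := by
  have hcard := Finset.card_filter_add_card_filter_not (s := Finset.univ) p
  rw [Finset.sum_ite, Finset.sum_const, Finset.sum_const, Nat.card_eq_fintype_card,
    Nat.card_eq_fintype_card, Fintype.card_subtype, ← Finset.card_univ, ← hcard]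
  push_cast
  ring

section IsLocalRing

variable {R : Type*} [CommRing R] [IsLocalRing R] [DecidablePred (IsUnit : R → Prop)]

theorem card_units_sub_not_isUnit (m : R) :
    Nat.card {u : Rˣ // ¬IsUnit (m - u)} = if IsUnit m then Nat.card (nonunits R) else 0 := by
  split_ifs with hm
  · have hsub (x : R) (hx : ¬IsUnit x) : IsUnit (m - x) := by
      by_contra h
      exact IsLocalRing.nonunits_add h hx (by rwa [sub_add_cancel])
    exact Nat.card_congr ⟨fun u => ⟨m - u.1, u.2⟩,
      fun x => ⟨(hsub x x.2).unit, by rw [IsUnit.unit_spec, sub_sub_cancel]; exact x.2⟩,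
      fun u => Subtype.ext (Units.ext (sub_sub_cancel m u.1)),
      fun x => Subtype.ext (sub_sub_cancel m x)⟩
  · refine @Nat.card_of_isEmpty _ ⟨fun u => ?_⟩
    have hu : (u.1 : R) ∈ IsLocalRing.maximalIdeal R := by
      simpa using Ideal.sub_mem _ ((IsLocalRing.mem_maximalIdeal _).2 hm)
        ((IsLocalRing.mem_maximalIdeal _).2 u.2)
    exact hu u.1.isUnit

theorem card_mul_unitSumCount_succ [Finite R] (k : ℕ) (m : R) :
    (Nat.card R : ℤ) * unitSumCount R (k + 1) m =
      if IsUnit m then (Nat.card Rˣ : ℤ) ^ (k + 1) - (-(Nat.card (nonunits R) : ℤ)) ^ (k + 1)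
      else Nat.card Rˣ * ((Nat.card Rˣ : ℤ) ^ k - (-(Nat.card (nonunits R) : ℤ)) ^ k) := by
  have := Fintype.ofFinite Rˣ
  rw [← Nat.card_units_add_card_nonunits R]
  induction k generalizing m with
  | zero =>
    rw [unitSumCount_one]
    split_ifs <;> push_cast <;> ring
  | succ k ih =>
    rw [unitSumCount_succ, Nat.cast_sum, Finset.mul_sum,
      Finset.sum_congr rfl fun (u : Rˣ) _ => ih (m - u), sum_ite_eq_card_mul_add_card_not_mul,
      card_units_sub_not_isUnit]
    split_ifs <;> push_cast <;> ring

end IsLocalRing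

namespace ZMod

theorem isUnit_intCast_iff_gcd_eq_one {n : ℕ} (z : ℤ) :
    IsUnit (z : ZMod n) ↔ Int.gcd z n = 1 := by
  rw [coe_int_isUnit_iff_isCoprime, Int.isCoprime_iff_gcd_eq_one, Int.gcd_comm]

theorem unitSumCount_mul {m n : ℕ} (hmn : m.Coprime n) (k : ℕ) (M : ℤ) :
    unitSumCount (ZMod (m * n)) k M = unitSumCount (ZMod m) k M * unitSumCount (ZMod n) k M := by
  rw [← unitSumCount_prod, ← unitSumCount_congr (chineseRemainder hmn), map_intCast]
  rfl

theorem unitSumCount_eq_prod_primePow (k : ℕ) (M : ℤ) {n : ℕ} (hn : n ≠ 0) :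
    (unitSumCount (ZMod n) k M : ℚ) =
      ∏ p ∈ n.primeFactors, (unitSumCount (ZMod (p ^ n.factorization p)) k M : ℚ) := by
  rw [Nat.multiplicative_factorization (fun n => (unitSumCount (ZMod n) k M : ℚ))
    (fun x y h => by simp [unitSumCount_mul h]) (by simp [unitSumCount_of_subsingleton]) hn,
    Nat.prod_factorization_eq_prod_primeFactors]

variable {p e : ℕ}

theorem isLocalRing_primePow [Fact p.Prime] (he : e ≠ 0) : IsLocalRing (ZMod (p ^ e)) :=
  have : Fact (1 < p ^ e) := ⟨Nat.one_lt_pow he (Fact.out : p.Prime).one_lt⟩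
  .of_surjective' (PadicInt.toZModPow e) (ZMod.ringHom_surjective _)

theorem isUnit_intCast_primePow_iff (hp : p.Prime) (he : e ≠ 0) (M : ℤ) :
    IsUnit (M : ZMod (p ^ e)) ↔ ¬(p : ℤ) ∣ M := by
  rw [coe_int_isUnit_iff_isCoprime, Nat.cast_pow, IsCoprime.pow_left_iff (Nat.pos_of_ne_zero he),
    Prime.coprime_iff_not_dvd (Nat.prime_iff_prime_int.mp hp)]

theorem card_units_primePow (hp : p.Prime) (he : e ≠ 0) :
    Nat.card (ZMod (p ^ e))ˣ = p ^ (e - 1) * (p - 1) := by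
  have : NeZero (p ^ e) := ⟨pow_ne_zero e hp.ne_zero⟩
  rw [Nat.card_eq_fintype_card, card_units_eq_totient,
    Nat.totient_prime_pow hp (Nat.pos_of_ne_zero he)]

theorem card_nonunits_primePow (hp : p.Prime) (he : e ≠ 0) :
    Nat.card (nonunits (ZMod (p ^ e))) = p ^ (e - 1) := by
  have : NeZero (p ^ e) := ⟨pow_ne_zero e hp.ne_zero⟩
  have hN := Nat.card_units_add_card_nonunits (ZMod (p ^ e))
  have hpe : p ^ (e - 1) * (p - 1) + p ^ (e - 1) = p ^ e := by
    rw [← Nat.mul_add_one, Nat.sub_add_cancel hp.one_le, ← pow_succ,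
      Nat.sub_add_cancel (Nat.pos_of_ne_zero he)]
  rw [card_units_primePow hp he, Nat.card_zmod] at hN
  omega

theorem unitSumCount_primePow (hp : p.Prime) (he : e ≠ 0) {k : ℕ} (hk : k ≠ 0) (M : ℤ) :
    (unitSumCount (ZMod (p ^ e)) k M : ℚ) = (p : ℚ) ^ (e * (k - 1)) *
      ((((p : ℚ) - 1) ^ k + (-1) ^ k * (if (p : ℤ) ∣ M then (p : ℚ) - 1 else -1)) /
        (p : ℚ) ^ k) := by
  have : Fact p.Prime := ⟨hp⟩
  have : IsLocalRing (ZMod (p ^ e)) := isLocalRing_primePow he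
  have : NeZero (p ^ e) := ⟨pow_ne_zero e hp.ne_zero⟩
  have hformula := card_mul_unitSumCount_succ (R := ZMod (p ^ e)) (k - 1) M
  simp only [Nat.card_zmod, card_units_primePow hp he, card_nonunits_primePow hp he,
    isUnit_intCast_primePow_iff hp he] at hformula
  obtain ⟨d, rfl⟩ := Nat.exists_eq_add_one_of_ne_zero he
  obtain ⟨j, rfl⟩ := Nat.exists_eq_add_one_of_ne_zero hk
  have hp0 : (p : ℚ) ≠ 0 := by exact_mod_cast hp.ne_zero
  have hp1 : ((p - 1 : ℕ) : ℚ) = p - 1 := by rw [Nat.cast_sub hp.one_le, Nat.cast_one]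
  refine mul_left_cancel₀ (pow_ne_zero (d + 1) hp0) ?_
  replace hformula := congrArg (Int.cast : ℤ → ℚ) hformula
  push_cast [apply_ite (Int.cast : ℤ → ℚ), hp1] at hformula ⊢
  rw [hformula]
  simp only [mul_pow, neg_pow ((p : ℚ) ^ d), ← pow_mul]
  split_ifs <;> field_simp <;> ring

end ZMod

theorem Ncount_eq_card_zmod (k : ℕ) (f : ℤ[X]) (c : ℤ) (n : ℕ) [NeZero n] :
    Ncount k f c n = Nat.card {y : Fin k → ZMod n //
      (∀ i, IsUnit ((f.map (Int.castRingHom (ZMod n))).eval (y i))) ∧ ∑ i, y i = c} := by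
  have hunit (z : ℤ) : Int.gcd (f.eval z) n = 1 ↔
      IsUnit ((f.map (Int.castRingHom (ZMod n))).eval (z : ZMod n)) := by
    rw [eval_intCast_map, Int.coe_castRingHom, ZMod.isUnit_intCast_iff_gcd_eq_one, Int.cast_id]
  have hsum (x : Fin k → ℤ) : (n : ℤ) ∣ ∑ i, x i - c ↔ ∑ i, (x i : ZMod n) = c := by
    rw [← ZMod.intCast_eq_intCast_iff_dvd_sub, Int.cast_sum, eq_comm]
  have hval (y : ZMod n) : ((y.val : ℤ) : ZMod n) = y := by simp
  exact Nat.card_congr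
    { toFun := fun x => ⟨fun i => x.1 i, fun i => (hunit _).1 (x.2.2.1 i), (hsum _).1 x.2.2.2⟩
      invFun := fun y => ⟨fun i => (y.1 i).val,
        fun i => ⟨by positivity, Int.ofNat_lt.2 (y.1 i).val_lt⟩,
        fun i => (hunit _).2 (by rw [hval]; exact y.2.1 i),
        (hsum _).2 (by simp only [hval]; exact y.2.2)⟩
      left_inv := fun x => Subtype.ext (funext fun i => by
        show ((x.1 i : ZMod n).val : ℤ) = x.1 i
        rw [ZMod.val_intCast, Int.emod_eq_of_lt (x.2.1 i).1 (x.2.1 i).2])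
      right_inv := fun y => Subtype.ext (funext fun i => hval _) }

theorem Ncount_linear_eq_unitSumCount (k : ℕ) (c : ℤ) (n : ℕ) [NeZero n] (a b : ℤ)
    (ha : IsUnit (a : ZMod n)) :
    Ncount k (C a * X + C b) c n = unitSumCount (ZMod n) k ((a * c + k * b : ℤ) : ZMod n) := by
  rw [Ncount_eq_card_zmod]
  convert card_affine_isUnit_sum_eq_unitSumCount ha.unit (b : ZMod n) (c : ZMod n) k using 1 <;>
    simp

theorem Ncount_linear (k : ℕ) (hk : 2 ≤ k) (c : ℤ) (n : ℕ) (hn : 0 < n)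
    (a b : ℤ) (ha : Int.gcd a n = 1) :
    (Ncount k (C a * X + C b) c n : ℚ) =
      (n : ℚ) ^ (k - 1) *
        ∏ p ∈ n.primeFactors,
          (((p : ℚ) - 1) ^ k +
            (-1 : ℚ) ^ k *
              (if (p : ℤ) ∣ (a * c + k * b) then (p : ℚ) - 1 else -1)) / (p : ℚ) ^ k := by
  have : NeZero n := ⟨hn.ne'⟩
  have hn_pow : (n : ℚ) ^ (k - 1) =
      ∏ p ∈ n.primeFactors, (p : ℚ) ^ (n.factorization p * (k - 1)) := by
    conv_lhs => rw [Nat.prod_primeFactors_pow_factorization hn.ne']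
    push_cast
    simp only [← Finset.prod_pow, pow_mul]
  rw [Ncount_linear_eq_unitSumCount k c n a b ((ZMod.isUnit_intCast_iff_gcd_eq_one a).2 ha),
    ZMod.unitSumCount_eq_prod_primePow k _ hn.ne', hn_pow, ← Finset.prod_mul_distrib]
  refine Finset.prod_congr rfl fun p hp => ?_
  exact ZMod.unitSumCount_primePow (Nat.prime_of_mem_primeFactors hp)
    (Finsupp.mem_support_iff.mp (n.support_factorization ▸ hp)) (by omega) _
end

section
/- Let c and n be integers with n ≥ 1, let k ≥ 2 be an integer, and let f(x) = (a_1 x − a_2)(b_1 x − b_2) with a_1, a_2, b_1, b_2 ∈ ℤ and gcd(a_1, n) = gcd(b_1, n) = gcd(a_1 b_2 − a_2 b_1, n) = 1. Then 𝒩_{k,f,c}(n) = (−1)^{kω(n)} · ∏_{p | n} p^{kν_p(n) − ν_p(n) − k} · ( p · Σ_{0 ≤ j ≤ k, (a_2 b_1 − a_1 b_2) j ≡ a_1 b_1 c − a_1 b_2 k (mod p)} C(k, j) + (2 − p)^k − 2^k ), where the product runs over prime divisors p of n. -/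
/-!
Reducing modulo `n`, `𝒩` counts `k`-tuples of `ℤ/n` with prescribed sum whose entries all lie in
the set `E_f(ℤ/n)` of `f`-exunits. By the Chinese remainder theorem this count is multiplicative
in `n`. Modulo `p ^ r` a residue is an exunit iff its reduction mod `p` is one; once the first
`k - 1` entries are chosen the last is determined, so the count at `p ^ r` is the count at `p`
times `p ^ ((r - 1) (k - 1))`. Modulo `p` the exunits of `(a₁x - a₂)(b₁x - b₂)` are the complement
of the two distinct roots `r₁ = a₂/a₁`, `r₂ = b₂/b₁`, and an induction on `k` shows that for any set
`S` in a finite abelian group `G`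
`|G| · #{x ∈ (G ∖ S)^k : ∑ x = c} = (|G| - |S|)^k - (-|S|)^k + |G| (-1)^k #{x ∈ S^k : ∑ x = c}`.
A tuple with entries in `{r₁, r₂}` taking the value `r₁` exactly `j` times has sum
`j r₁ + (k - j) r₂`, which gives the binomial sum.
-/

open Polynomial

open Finset

noncomputable def sumCount {G : Type*} [AddCommMonoid G] (s : Set G) (k : ℕ) (c : G) : ℕ :=
  Nat.card {x : Fin k → G // (∀ i, x i ∈ s) ∧ ∑ i, x i = c}

section AddCommMonoid

variable {G H : Type*} [AddCommMonoid G] [AddCommMonoid H]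

theorem sumCount_zero [DecidableEq G] (s : Set G) (c : G) :
    sumCount s 0 c = if c = 0 then 1 else 0 := by
  split_ifs with hc
  · subst hc
    have : Unique {x : Fin 0 → G // (∀ i, x i ∈ s) ∧ ∑ i, x i = 0} :=
      ⟨⟨⟨finZeroElim, finZeroElim, rfl⟩⟩, fun x => Subtype.ext (funext finZeroElim)⟩
    exact Nat.card_unique
  · have : IsEmpty {x : Fin 0 → G // (∀ i, x i ∈ s) ∧ ∑ i, x i = c} :=
      ⟨fun x => hc (by simpa using x.2.2.symm)⟩
    exact Nat.card_of_isEmpty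

theorem sumCount_prod (s : Set G) (t : Set H) (k : ℕ) (c : G) (d : H) :
    sumCount (s ×ˢ t) k (c, d) = sumCount s k c * sumCount t k d := by
  rw [sumCount, sumCount, sumCount, ← Nat.card_prod]
  refine Nat.card_congr (((Equiv.arrowProdEquivProdArrow _ _ _).subtypeEquiv fun x => ?_).trans
    Equiv.subtypeProdEquivProd)
  simp only [Set.mem_prod, forall_and, Prod.ext_iff, Prod.fst_sum, Prod.snd_sum]
  tauto

theorem sumCount_preimage_addEquiv (e : G ≃+ H) (t : Set H) (k : ℕ) (c : G) :
    sumCount (e ⁻¹' t) k c = sumCount t k (e c) := by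
  refine Nat.card_congr ((Equiv.piCongrRight fun _ => e.toEquiv).subtypeEquiv fun x => ?_)
  simp [← map_sum, e.injective.eq_iff]

theorem card_subtype_finset_card_eq_sum_choose (k : ℕ) (P : ℕ → Prop) [DecidablePred P] :
    Nat.card {T : Finset (Fin k) // P #T} =
      ∑ j ∈ range (k + 1), if P j then k.choose j else 0 := by
  rw [Nat.card_eq_fintype_card, Fintype.card_subtype, Finset.card_filter, ← Finset.powerset_univ,
    Finset.sum_powerset_apply_card (fun j => if P j then 1 else 0)]
  simp

def finsetEquivTuplesInPair [DecidableEq G] {r₁ r₂ : G} (h : r₁ ≠ r₂) (k : ℕ) :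
    Finset (Fin k) ≃ {x : Fin k → G // ∀ i, x i ∈ ({r₁, r₂} : Set G)} where
  toFun T := ⟨fun i => if i ∈ T then r₁ else r₂, fun i => by by_cases hi : i ∈ T <;> simp [hi]⟩
  invFun x := {i | x.1 i = r₁}
  left_inv T := by ext i; by_cases hi : i ∈ T <;> simp [hi, h.symm]
  right_inv x := by
    ext i
    rcases x.2 i with hx | hx
    · simp [hx]
    · simp [Set.mem_singleton_iff.mp hx, h.symm]

theorem sumCount_pair [DecidableEq G] {r₁ r₂ : G} (h : r₁ ≠ r₂) (k : ℕ) (c : G) :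
    sumCount {r₁, r₂} k c =
      ∑ j ∈ range (k + 1), if j • r₁ + (k - j) • r₂ = c then k.choose j else 0 := by
  rw [← card_subtype_finset_card_eq_sum_choose, sumCount]
  refine (Nat.card_congr ?_).symm
  refine ((finsetEquivTuplesInPair h k).subtypeEquiv fun T => ?_).trans
    (Equiv.subtypeSubtypeEquivSubtypeInter _ fun x : Fin k → G => ∑ i, x i = c)
  simp only [finsetEquivTuplesInPair, Equiv.coe_fn_mk, Finset.sum_ite, Finset.sum_const,
    Finset.filter_mem_eq_inter, Finset.univ_inter]
  rw [Finset.filter_notMem_eq_sdiff, ← Finset.compl_eq_univ_sdiff, Finset.card_compl,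
    Fintype.card_fin]

end AddCommMonoid

section AddCommGroup

variable {G H : Type*} [AddCommGroup G] [AddCommGroup H]

def sumCountSuccEquivSigma (s : Set G) (k : ℕ) (c : G) :
    {x : Fin (k + 1) → G // (∀ i, x i ∈ s) ∧ ∑ i, x i = c} ≃
      Σ a : G, {y : Fin k → G // a ∈ s ∧ (∀ i, y i ∈ s) ∧ ∑ i, y i = c - a} :=
  (Equiv.subtypeEquiv (Fin.consEquiv fun _ => G).symm fun x => by
      simp only [Fin.forall_fin_succ, Fin.sum_univ_succ, eq_sub_iff_add_eq', and_assoc]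
      rfl).trans
    (Equiv.subtypeProdEquivSigmaSubtype
      fun (a : G) (y : Fin k → G) => a ∈ s ∧ (∀ i, y i ∈ s) ∧ ∑ i, y i = c - a)

def sumCountSuccEquivTail (s : Set G) (k : ℕ) (c : G) :
    {x : Fin (k + 1) → G // (∀ i, x i ∈ s) ∧ ∑ i, x i = c} ≃
      {y : Fin k → G // (∀ i, y i ∈ s) ∧ c - ∑ i, y i ∈ s} where
  toFun x := ⟨Fin.tail x.1, fun i => x.2.1 i.succ, by
    simpa [← x.2.2, Fin.sum_univ_succ, Fin.tail] using x.2.1 0⟩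
  invFun y := ⟨Fin.cons (c - ∑ i, y.1 i) y.1, fun i => Fin.cases y.2.2 y.2.1 i, by
    simp [Fin.sum_univ_succ]⟩
  left_inv x := by
    ext i
    refine Fin.cases ?_ (fun _ => rfl) i
    simp [← x.2.2, Fin.sum_univ_succ, Fin.tail]
  right_inv y := rfl

theorem sumCount_succ [Fintype G] [DecidableEq G] (S : Finset G) (k : ℕ) (c : G) :
    sumCount (S : Set G) (k + 1) c = ∑ a ∈ S, sumCount (S : Set G) k (c - a) := by
  rw [sumCount, Nat.card_congr (sumCountSuccEquivSigma _ k c), Nat.card_sigma,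
    ← Finset.sum_subset (Finset.subset_univ S)]
  · refine Finset.sum_congr rfl fun a ha => Nat.card_congr ?_
    exact Equiv.subtypeEquivRight fun y => and_iff_right (Finset.mem_coe.mpr ha)
  · intro a _ ha
    have : IsEmpty {y : Fin k → G // a ∈ (S : Set G) ∧ (∀ i, y i ∈ (S : Set G)) ∧
        ∑ i, y i = c - a} := ⟨fun y => ha y.2.1⟩
    exact Nat.card_of_isEmpty

theorem sum_sumCount [Fintype G] [DecidableEq G] (S : Finset G) (k : ℕ) :
    ∑ c, sumCount (S : Set G) k c = #S ^ k := by
  induction k with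
  | zero => simp [sumCount_zero]
  | succ k ih =>
    simp only [sumCount_succ]
    rw [Finset.sum_comm, Finset.sum_congr rfl fun a _ => Fintype.sum_equiv (Equiv.subRight a)
      (fun c => sumCount (S : Set G) k (c - a)) (sumCount (S : Set G) k) fun _ => rfl]
    rw [ih, Finset.sum_const, smul_eq_mul, pow_succ']

theorem sumCount_compl [Fintype G] [DecidableEq G] (S : Finset G) (k : ℕ) (c : G) :
    (Fintype.card G : ℤ) * sumCount (Sᶜ : Finset G) k c =
      (Fintype.card G - #S : ℤ) ^ k - (-#S : ℤ) ^ k +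
        Fintype.card G * (-1) ^ k * sumCount (S : Set G) k c := by
  induction k generalizing c with
  | zero => simp [sumCount_zero]
  | succ k ih =>
    have hsum : ∑ a ∈ Sᶜ, (sumCount (Sᶜ : Finset G) k (c - a) : ℤ) =
        (Fintype.card G - #S : ℤ) ^ k - ∑ a ∈ S, (sumCount (Sᶜ : Finset G) k (c - a) : ℤ) := by
      rw [eq_sub_iff_add_eq, Finset.sum_compl_add_sum, ← Nat.cast_sum,
        Fintype.sum_equiv (Equiv.subLeft c) (fun a => sumCount ((Sᶜ : Finset G) : Set G) k (c - a))
          (sumCount ((Sᶜ : Finset G) : Set G) k) fun _ => rfl,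
        sum_sumCount, Finset.card_compl, Nat.cast_pow, Nat.cast_sub (Finset.card_le_univ S)]
    rw [sumCount_succ, sumCount_succ, Nat.cast_sum, hsum, mul_sub, Finset.mul_sum]
    simp only [ih, Finset.sum_add_distrib, Finset.sum_sub_distrib, Finset.sum_const, nsmul_eq_mul,
      ← Finset.mul_sum, Nat.cast_sum]
    ring

noncomputable def AddMonoidHom.subtypeCompEquivProdKer (φ : G →+ H)
    (hφ : Function.Surjective φ) (P : H → Prop) : {x : G // P (φ x)} ≃ {y : H // P y} × φ.ker where
  toFun x := (⟨φ x, x.2⟩, ⟨x - Function.surjInv hφ (φ x), by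
    simp [Function.surjInv_eq hφ]⟩)
  invFun yz := ⟨Function.surjInv hφ yz.1 + yz.2, by
    simpa [Function.surjInv_eq hφ, φ.mem_ker.mp yz.2.2] using yz.1.2⟩
  left_inv x := by simp
  right_inv yz := by ext <;> simp [Function.surjInv_eq hφ, φ.mem_ker.mp yz.2.2]

theorem AddMonoidHom.card_subtype_comp (φ : G →+ H) (hφ : Function.Surjective φ)
    (P : H → Prop) : Nat.card {x : G // P (φ x)} = Nat.card {y : H // P y} * Nat.card φ.ker := by
  rw [Nat.card_congr (φ.subtypeCompEquivProdKer hφ P), Nat.card_prod]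

theorem sumCount_preimage (φ : G →+ H) (hφ : Function.Surjective φ) (t : Set H) (k : ℕ)
    (c : G) : sumCount (φ ⁻¹' t) (k + 1) c = sumCount t (k + 1) (φ c) * Nat.card φ.ker ^ k := by
  let Φ := φ.compLeft (Fin k)
  have hker : Nat.card Φ.ker = Nat.card φ.ker ^ k := by
    have e : Φ.ker ≃ (Fin k → φ.ker) :=
      (Equiv.subtypeEquivRight fun z => by simp [Φ, funext_iff]).trans
        (Equiv.subtypePiEquivPi (p := fun _ g => g ∈ φ.ker))
    rw [Nat.card_congr e, Nat.card_fun, Nat.card_fin]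
  unfold sumCount
  rw [Nat.card_congr (sumCountSuccEquivTail _ k c),
    Nat.card_congr (sumCountSuccEquivTail _ k (φ c)), ← hker,
    ← Φ.card_subtype_comp hφ.comp_left (fun y => (∀ i, y i ∈ t) ∧ φ c - ∑ i, y i ∈ t)]
  refine Nat.card_congr (Equiv.subtypeEquivRight fun y => ?_)
  simp [Φ, map_sub, map_sum]

end AddCommGroup

def exunits (f : ℤ[X]) (R : Type*) [CommRing R] : Set R := {z | IsUnit (aeval z f)}

section Exunits

variable (f : ℤ[X]) {R S : Type*} [CommRing R] [CommRing S]

theorem preimage_exunits_of_isUnit_map_iff (φ : R →+* S) (hφ : ∀ w, IsUnit (φ w) ↔ IsUnit w) :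
    φ ⁻¹' exunits f S = exunits f R := by
  ext z
  simp only [exunits, Set.mem_preimage, Set.mem_ofPred_eq]
  rw [show aeval (φ z) f = φ (aeval z f) from aeval_algHom_apply φ.toIntAlgHom z f, hφ]

theorem exunits_prod : exunits f (R × S) = exunits f R ×ˢ exunits f S := by
  ext z
  simp only [exunits, Set.mem_prod, Set.mem_ofPred_eq, Prod.isUnit_iff]
  rw [← AlgHom.fst_apply (R := ℤ), ← AlgHom.snd_apply (R := ℤ), ← aeval_algHom_apply,
    ← aeval_algHom_apply]
  rfl

theorem intCast_mem_exunits_zmod_iff {n : ℕ} (z : ℤ) :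
    (z : ZMod n) ∈ exunits f (ZMod n) ↔ Int.gcd (f.eval z) n = 1 := by
  rw [exunits, Set.mem_ofPred_eq, aeval_def, eval₂_at_intCast, algebraMap_int_eq, eq_intCast,
    ZMod.coe_int_isUnit_iff_isCoprime, Int.isCoprime_iff_gcd_eq_one, Int.gcd_comm, Int.cast_id]

theorem ZMod.isUnit_castHom_iff {p r : ℕ} (hp : p.Prime) (hr : r ≠ 0) (w : ZMod (p ^ r)) :
    IsUnit (ZMod.castHom (dvd_pow_self p hr) (ZMod p) w) ↔ IsUnit w := by
  have : NeZero (p ^ r) := ⟨pow_ne_zero r hp.ne_zero⟩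
  rw [← ZMod.natCast_zmod_val w, map_natCast, ZMod.isUnit_iff_coprime, Nat.coprime_comm,
    hp.coprime_iff_not_dvd, ZMod.isUnit_natCast_iff_not_dvd_pow hp (Nat.pos_of_ne_zero hr)]

theorem exunits_quadratic {F : Type*} [Field F] {a₁ a₂ b₁ b₂ : ℤ} (ha : (a₁ : F) ≠ 0)
    (hb : (b₁ : F) ≠ 0) :
    exunits ((C a₁ * X - C a₂) * (C b₁ * X - C b₂)) F = {(a₂ : F) / a₁, (b₂ : F) / b₁}ᶜ := by
  ext z
  simp [exunits, sub_eq_zero, eq_div_iff, ha, hb, mul_comm]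

end Exunits

theorem Ncount_eq_sumCount (k : ℕ) (f : ℤ[X]) (c : ℤ) {n : ℕ} (hn : n ≠ 0) :
    Ncount k f c n = sumCount (exunits f (ZMod n)) k c := by
  have : NeZero n := ⟨hn⟩
  have hval : ∀ z : ℤ, 0 ≤ z ∧ z < n → ((z : ZMod n).val : ℤ) = z := fun z hz => by
    rw [ZMod.val_intCast, Int.emod_eq_of_lt hz.1 hz.2]
  have hcast : ∀ y : ZMod n, (((y.val : ℤ)) : ZMod n) = y := fun y => by simp
  have hsum : ∀ x : Fin k → ℤ, (n : ℤ) ∣ (∑ i, x i) - c ↔ ∑ i, (x i : ZMod n) = c := fun x => by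
    rw [← Int.cast_sum, ZMod.intCast_eq_intCast_iff_dvd_sub, ← dvd_neg, neg_sub]
  refine Nat.card_congr
    { toFun := fun x => ⟨fun i => x.1 i,
        fun i => (intCast_mem_exunits_zmod_iff f _).mpr (x.2.2.1 i), (hsum x.1).mp x.2.2.2⟩
      invFun := fun y => ⟨fun i => (y.1 i).val,
        fun i => ⟨by positivity, Int.ofNat_lt.mpr (y.1 i).val_lt⟩,
        fun i => (intCast_mem_exunits_zmod_iff f _).mp (by rw [hcast]; exact y.2.1 i),
        (hsum _).mpr (by simpa only [hcast] using y.2.2)⟩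
      left_inv := fun x => Subtype.ext (funext fun i => hval _ (x.2.1 i))
      right_inv := fun y => Subtype.ext (funext fun i => hcast _) }

section ZModCount

variable (f : ℤ[X]) (k : ℕ) (c : ℤ)

theorem sumCount_exunits_zmod_one : sumCount (exunits f (ZMod 1)) k c = 1 :=
  Nat.card_eq_one_iff_unique.mpr
    ⟨inferInstance, ⟨⟨0, fun _ => isUnit_of_subsingleton _, Subsingleton.elim _ _⟩⟩⟩

theorem sumCount_exunits_zmod_mul {m n : ℕ} (h : m.Coprime n) :
    sumCount (exunits f (ZMod (m * n))) k c =
      sumCount (exunits f (ZMod m)) k c * sumCount (exunits f (ZMod n)) k c := by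
  let e := ZMod.chineseRemainder h
  have hc : e.toAddEquiv c = ((c : ZMod m), (c : ZMod n)) := by ext <;> simp [e]
  rw [← preimage_exunits_of_isUnit_map_iff f e.toRingHom fun w => isUnit_map_iff e w,
    exunits_prod, ← sumCount_prod, ← hc]
  exact sumCount_preimage_addEquiv e.toAddEquiv _ k c

theorem sumCount_exunits_zmod_eq_prod {n : ℕ} (hn : n ≠ 0) :
    sumCount (exunits f (ZMod n)) k c =
      ∏ p ∈ n.primeFactors, sumCount (exunits f (ZMod (p ^ n.factorization p))) k c := by
  rw [Nat.multiplicative_factorization (fun n => sumCount (exunits f (ZMod n)) k c)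
    (fun _ _ => sumCount_exunits_zmod_mul f k c) (sumCount_exunits_zmod_one f k c) hn,
    Finsupp.prod, Nat.support_factorization]

theorem card_ker_castHom_prime_pow {p r : ℕ} (hp : p.Prime) (hr : r ≠ 0) :
    Nat.card (ZMod.castHom (dvd_pow_self p hr) (ZMod p)).toAddMonoidHom.ker = p ^ (r - 1) := by
  have h := (ZMod.castHom (dvd_pow_self p hr) (ZMod p)).toAddMonoidHom.card_subtype_comp
    (ZMod.castHom_surjective (dvd_pow_self p hr)) fun _ => True
  simp only [Nat.card_congr (Equiv.subtypeUnivEquiv fun _ => trivial), Nat.card_zmod] at h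
  exact (Nat.eq_of_mul_eq_mul_left hp.pos ((mul_pow_sub_one hr p).trans h)).symm

theorem sumCount_exunits_zmod_prime_pow {p r : ℕ} (hp : p.Prime) (hr : r ≠ 0) :
    sumCount (exunits f (ZMod (p ^ r))) (k + 1) c =
      sumCount (exunits f (ZMod p)) (k + 1) c * p ^ ((r - 1) * k) := by
  let φ := ZMod.castHom (dvd_pow_self p hr) (ZMod p)
  rw [← preimage_exunits_of_isUnit_map_iff f φ (ZMod.isUnit_castHom_iff hp hr)]
  rw [show φ ⁻¹' exunits f (ZMod p) = φ.toAddMonoidHom ⁻¹' exunits f (ZMod p) from rfl,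
    sumCount_preimage _ (ZMod.castHom_surjective (dvd_pow_self p hr)),
    card_ker_castHom_prime_pow hp hr, pow_mul]
  simp [φ]

end ZModCount

theorem ZMod.intCast_ne_zero_of_gcd_eq_one {a : ℤ} {n p : ℕ} (h : Int.gcd a n = 1)
    (hp : p.Prime) (hpn : p ∣ n) : (a : ZMod p) ≠ 0 := by
  have := Fact.mk hp
  refine IsUnit.ne_zero ((ZMod.coe_int_isUnit_iff_isCoprime a p).mpr ?_)
  exact (Int.isCoprime_iff_gcd_eq_one.mpr h).symm.of_isCoprime_of_dvd_left
    (Int.natCast_dvd_natCast.mpr hpn)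

section Quadratic

variable {a₁ a₂ b₁ b₂ : ℤ}

theorem nsmul_div_add_nsmul_div_eq_iff_dvd {p : ℕ} [Fact p.Prime] (ha : (a₁ : ZMod p) ≠ 0)
    (hb : (b₁ : ZMod p) ≠ 0) {k j : ℕ} (hj : j ≤ k) (c : ℤ) :
    j • ((a₂ : ZMod p) / a₁) + (k - j) • ((b₂ : ZMod p) / b₁) = c ↔
      (p : ℤ) ∣ (a₂ * b₁ - a₁ * b₂) * j - (a₁ * b₁ * c - a₁ * b₂ * k) := by
  rw [← ZMod.intCast_zmod_eq_zero_iff_dvd, nsmul_eq_mul, nsmul_eq_mul, Nat.cast_sub hj]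
  push_cast
  field_simp
  constructor <;> intro h <;> linear_combination h

theorem sumCount_exunits_quadratic_zmod_prime {p : ℕ} [Fact p.Prime] (ha : (a₁ : ZMod p) ≠ 0)
    (hb : (b₁ : ZMod p) ≠ 0) (hab : ((a₁ * b₂ - a₂ * b₁ : ℤ) : ZMod p) ≠ 0) (k : ℕ) (c : ℤ) :
    (p : ℤ) * sumCount (exunits ((C a₁ * X - C a₂) * (C b₁ * X - C b₂)) (ZMod p)) k c =
      (p - 2) ^ k - (-2) ^ k + p * (-1) ^ k * ∑ j ∈ range (k + 1),
        if (p : ℤ) ∣ (a₂ * b₁ - a₁ * b₂) * j - (a₁ * b₁ * c - a₁ * b₂ * k)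
        then (k.choose j : ℤ) else 0 := by
  have hne : (a₂ : ZMod p) / a₁ ≠ b₂ / b₁ := by
    rw [Ne, div_eq_div_iff ha hb]
    contrapose! hab
    push_cast
    linear_combination -hab
  have h := sumCount_compl {(a₂ : ZMod p) / a₁, (b₂ : ZMod p) / b₁} k c
  rw [ZMod.card, Finset.card_pair hne, Finset.coe_compl, Finset.coe_pair,
    sumCount_pair hne] at h
  rw [exunits_quadratic ha hb, h, Nat.cast_sum]
  congr 2
  refine Finset.sum_congr rfl fun j hj => ?_
  rw [Nat.cast_ite, Nat.cast_zero]
  exact if_congr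
    (nsmul_div_add_nsmul_div_eq_iff_dvd ha hb (Nat.lt_succ_iff.mp (Finset.mem_range.mp hj)) c)
    rfl rfl

theorem sumCount_exunits_quadratic_zmod_prime_pow {p r : ℕ} (hp : p.Prime) (hr : r ≠ 0)
    (ha : (a₁ : ZMod p) ≠ 0) (hb : (b₁ : ZMod p) ≠ 0)
    (hab : ((a₁ * b₂ - a₂ * b₁ : ℤ) : ZMod p) ≠ 0) {k : ℕ} (hk : k ≠ 0) (c : ℤ) :
    (sumCount (exunits ((C a₁ * X - C a₂) * (C b₁ * X - C b₂)) (ZMod (p ^ r))) k c : ℚ) =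
      (-1) ^ k * ((p : ℚ) ^ ((k : ℤ) * r - r - k) *
        (p * (∑ j ∈ range (k + 1),
          if (p : ℤ) ∣ (a₂ * b₁ - a₁ * b₂) * j - (a₁ * b₁ * c - a₁ * b₂ * k)
          then (k.choose j : ℚ) else 0) + (2 - p) ^ k - 2 ^ k)) := by
  have := Fact.mk hp
  have hp0 : (p : ℚ) ≠ 0 := Nat.cast_ne_zero.mpr hp.ne_zero
  set W : ℚ := ∑ j ∈ range (k + 1),
    if (p : ℤ) ∣ (a₂ * b₁ - a₁ * b₂) * j - (a₁ * b₁ * c - a₁ * b₂ * k)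
    then (k.choose j : ℚ) else 0 with hW
  have hprime : (p : ℚ) * sumCount (exunits ((C a₁ * X - C a₂) * (C b₁ * X - C b₂)) (ZMod p))
      k c = (p - 2) ^ k - (-2) ^ k + p * (-1) ^ k * W := by
    rw [hW]
    exact_mod_cast sumCount_exunits_quadratic_zmod_prime ha hb hab k c
  obtain ⟨m, rfl⟩ : ∃ m, k = m + 1 := ⟨k - 1, by omega⟩
  have hexp : (p : ℚ) ^ (((m + 1 : ℕ) : ℤ) * r - r - (m + 1 : ℕ)) = p ^ ((r - 1) * m) / p := by
    rw [div_eq_mul_inv, ← zpow_natCast, ← zpow_sub_one₀ hp0]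
    congr 1
    push_cast [Nat.cast_sub (Nat.one_le_iff_ne_zero.mpr hr)]
    ring
  have hsign : ∀ x : ℚ, (-1) ^ (m + 1) * x ^ (m + 1) = (-x) ^ (m + 1) := fun x => by
    rw [← mul_pow, neg_one_mul]
  rw [sumCount_exunits_zmod_prime_pow _ m c hp hr, hexp, Nat.cast_mul, Nat.cast_pow]
  field_simp
  linear_combination hprime - hsign (2 - p) + hsign 2

end Quadratic

theorem Ncount_quadratic (k : ℕ) (hk : 2 ≤ k) (c : ℤ) (n : ℕ) (hn : 0 < n)
    (a₁ a₂ b₁ b₂ : ℤ) (ha : Int.gcd a₁ n = 1) (hb : Int.gcd b₁ n = 1)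
    (hab : Int.gcd (a₁ * b₂ - a₂ * b₁) n = 1) :
    (Ncount k ((C a₁ * X - C a₂) * (C b₁ * X - C b₂)) c n : ℚ) =
      (-1 : ℚ) ^ (k * n.primeFactors.card) *
        ∏ p ∈ n.primeFactors,
          (p : ℚ) ^ ((k : ℤ) * (n.factorization p) - (n.factorization p) - k) *
            ((p : ℚ) *
              (∑ j ∈ Finset.range (k + 1),
                if (p : ℤ) ∣ ((a₂ * b₁ - a₁ * b₂) * j - (a₁ * b₁ * c - a₁ * b₂ * k))
                then (k.choose j : ℚ) else 0) +
              (2 - (p : ℚ)) ^ k - 2 ^ k) := by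
  rw [Ncount_eq_sumCount k _ c hn.ne', sumCount_exunits_zmod_eq_prod _ k c hn.ne', Nat.cast_prod,
    pow_mul, Finset.pow_card_mul_prod]
  refine Finset.prod_congr rfl fun p hp => ?_
  have hp' := Nat.prime_of_mem_primeFactors hp
  have hpn := Nat.dvd_of_mem_primeFactors hp
  exact sumCount_exunits_quadratic_zmod_prime_pow hp'
    (hp'.factorization_pos_of_dvd hn.ne' hpn).ne'
    (ZMod.intCast_ne_zero_of_gcd_eq_one ha hp' hpn) (ZMod.intCast_ne_zero_of_gcd_eq_one hb hp' hpn)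
    (ZMod.intCast_ne_zero_of_gcd_eq_one hab hp' hpn) (by omega) c
end

section
/- Let p be a prime, let k ≥ 2 and c be integers, let a, b ∈ ℤ_p with a ≠ b, and let f(x) = (x − a)(x − b). Then 𝓜_{k,f,c}(p) = p^{k-1} − ((−1)^k / p) · ( p · Σ_{0 ≤ j ≤ k, (a−b) j ≡ c − bk (mod p)} C(k, j) + (2 − p)^k − 2^k ). -/
/-!
Reducing modulo `p`, `Mcount` counts the tuples `y ∈ 𝔽_p^(k-1)` at which the product vanishes.
The complementary tuples, extended by the last entry `c - ∑ y`, are exactly the `k`-tuples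
from `A = 𝔽_p \ {a, b}` with sum `c`; call their number `N_k(c)`, and let `D_k(c)` count the
`k`-tuples from `{a, b}` with sum `c`. Fixing one entry gives
`N_{k+1}(c) = (p - 2)^k - N_k(c - a) - N_k(c - b)` and `D_{k+1}(c) = D_k(c - a) + D_k(c - b)`,
so by induction `p N_k(c) = (p - 2)^k - (-2)^k + p (-1)^k D_k(c)`. A tuple from `{a, b}`
with `j` entries equal to `a` has sum `j a + (k - j) b`, whence
`D_k(c) = ∑_j C(k, j) [j a + (k - j) b = c]`.
-/

open Polynomial

open Finset Fintype

lemma card_filter_card_eq_sum_choose {α : Type*} [Fintype α] (P : ℕ → Prop)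
    [DecidablePred P] :
    #{S : Finset α | P #S} =
      ∑ j ∈ range (Fintype.card α + 1), if P j then (Fintype.card α).choose j else 0 := by
  rw [card_filter, ← powerset_univ, sum_powerset_apply_card (fun j => if P j then 1 else 0)]
  simp

section TupleSum

variable {G : Type*} [AddCommGroup G] [DecidableEq G]

def tupleSumCount (A : Finset G) (k : ℕ) (c : G) : ℕ :=
  #{y ∈ piFinset fun _ : Fin k => A | ∑ i, y i = c}

variable (A : Finset G)

lemma tupleSumCount_zero (c : G) : tupleSumCount A 0 c = if c = 0 then 1 else 0 := by
  by_cases hc : c = 0 <;> simp [tupleSumCount, hc, eq_comm (a := (0 : G))]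

lemma tupleSumCount_succ_eq_card (k : ℕ) (c : G) :
    tupleSumCount A (k + 1) c = #{y ∈ piFinset fun _ : Fin k => A | c - ∑ i, y i ∈ A} := by
  refine card_nbij' Fin.init (fun y => Fin.snoc y (c - ∑ i, y i)) ?_ ?_ ?_ ?_
  · intro y hy
    simp only [coe_filter, Set.mem_ofPred_eq, mem_piFinset, Fin.sum_univ_castSucc] at hy ⊢
    obtain ⟨hA, rfl⟩ := hy
    exact ⟨fun i => hA _, by simpa [Fin.init] using hA (Fin.last k)⟩
  · intro y hy
    simp only [coe_filter, Set.mem_ofPred_eq, mem_piFinset, Fin.sum_univ_castSucc] at hy ⊢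
    refine ⟨Fin.lastCases (by simpa using hy.2) (fun i => by simpa using hy.1 i), ?_⟩
    simp
  · intro y hy
    simp only [coe_filter, Set.mem_ofPred_eq, mem_piFinset, Fin.sum_univ_castSucc] at hy
    rw [← hy.2]
    simp [Fin.init]
  · intro y _
    simp

lemma tupleSumCount_succ (k : ℕ) (c : G) :
    tupleSumCount A (k + 1) c = ∑ z ∈ A, tupleSumCount A k (c - z) := by
  rw [tupleSumCount_succ_eq_card,
    card_eq_sum_card_fiberwise (f := fun y : Fin k → G => c - ∑ i, y i) (t := A)
      (s := {y ∈ piFinset fun _ : Fin k => A | c - ∑ i, y i ∈ A})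
      fun y hy => (mem_filter.1 hy).2]
  refine sum_congr rfl fun z hz => ?_
  rw [tupleSumCount, filter_filter]
  refine congrArg card (filter_congr fun y _ => ?_)
  constructor
  · rintro ⟨-, rfl⟩
    abel
  · intro h
    rw [h, sub_sub_cancel]
    exact ⟨hz, rfl⟩

lemma sum_tupleSumCount [Fintype G] (k : ℕ) : ∑ c, tupleSumCount A k c = #A ^ k := by
  rw [← card_piFinset_const, card_eq_sum_card_fiberwise (f := fun y => ∑ i, y i)
    (t := univ) (fun _ _ => mem_univ _)]
  rfl

lemma card_mul_tupleSumCount_compl [Fintype G] {R : Type*} [CommRing R] (B : Finset G) (k : ℕ)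
    (c : G) :
    (Fintype.card G : R) * tupleSumCount Bᶜ k c =
      (Fintype.card G - #B) ^ k - (-#B : R) ^ k +
        Fintype.card G * (-1) ^ k * tupleSumCount B k c := by
  induction k generalizing c with
  | zero => simp [tupleSumCount_zero]
  | succ k ih =>
    have hcompl : (#Bᶜ : R) = Fintype.card G - #B := by
      rw [card_compl, Nat.cast_sub (card_le_univ B)]
    have htotal : ∑ z, (tupleSumCount Bᶜ k (c - z) : R) = (Fintype.card G - #B) ^ k := by
      rw [← hcompl, ← Nat.cast_pow, ← sum_tupleSumCount, Nat.cast_sum]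
      exact Fintype.sum_equiv (Equiv.subLeft c) _ _ fun _ => rfl
    have hsplit := sum_compl_add_sum B fun z => (tupleSumCount Bᶜ k (c - z) : R)
    have hB := sum_congr (s₁ := B) rfl fun z _ => ih (c - z)
    rw [sum_add_distrib, sum_const, nsmul_eq_mul, ← mul_sum, ← mul_sum] at hB
    push_cast [tupleSumCount_succ]
    linear_combination (Fintype.card G : R) * (hsplit.trans htotal) - hB

lemma tupleSumCount_pair {a b : G} (hab : a ≠ b) (k : ℕ) (c : G) :
    tupleSumCount {a, b} k c =
      ∑ j ∈ range (k + 1), if j • a + (k - j) • b = c then k.choose j else 0 := by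
  have hsum (S : Finset (Fin k)) :
      ∑ i, (if i ∈ S then a else b) = #S • a + (k - #S) • b := by
    rw [Finset.sum_ite, sum_const, sum_const, filter_mem_eq_inter, univ_inter,
      filter_not, filter_mem_eq_inter, univ_inter, ← compl_eq_univ_sdiff, card_compl,
      Fintype.card_fin]
  have hdecode (y : Fin k → G) (hy : y ∈ piFinset fun _ => {a, b}) :
      (fun i => if i ∈ ({i | y i = a} : Finset (Fin k)) then a else b) = y := by
    funext i
    rcases mem_insert.1 (mem_piFinset.1 hy i) with h | h <;> simp_all [hab.symm]
  have hencode (S : Finset (Fin k)) :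
      ({i | (if i ∈ S then a else b) = a} : Finset (Fin k)) = S := by
    ext i
    by_cases h : i ∈ S <;> simp [h, hab.symm]
  rw [← Fintype.card_fin k, ← card_filter_card_eq_sum_choose, Fintype.card_fin]
  refine card_nbij' (fun y => ({i | y i = a} : Finset (Fin k)))
    (fun S i => if i ∈ S then a else b) ?_ ?_ (fun y hy => hdecode y (mem_filter.1 hy).1)
    (fun S _ => hencode S)
  · intro y hy
    obtain ⟨hy, hc⟩ := mem_filter.1 hy
    rw [mem_coe, mem_filter, ← hsum]
    exact ⟨mem_univ _, (congrArg (fun y : Fin k → G => ∑ i, y i) (hdecode y hy)).trans hc⟩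
  · intro S hS
    refine mem_filter.2 ⟨mem_piFinset.2 fun i => ?_, ?_⟩
    · dsimp only
      split_ifs <;> simp
    · rw [hsum]
      exact (mem_filter.1 hS).2

end TupleSum

def ZMod.boundedIntPiEquiv (p : ℕ) [NeZero p] (ι : Type*) :
    {x : ι → ℤ // ∀ i, 0 ≤ x i ∧ x i < p} ≃ (ι → ZMod p) where
  toFun x i := x.1 i
  invFun y := ⟨fun i => (y i).val, fun i =>
    ⟨Int.natCast_nonneg _, show ((y i).val : ℤ) < p by exact_mod_cast (y i).val_lt⟩⟩
  left_inv x := by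
    ext i
    simp only [ZMod.val_intCast]
    exact Int.emod_eq_of_lt (x.2 i).1 (x.2 i).2
  right_inv y := by
    ext i
    simp

lemma Mcount_eq_card (p : ℕ) [NeZero p] (k : ℕ) (f : ℤ[X]) (c : ℤ) :
    Mcount k f c p = #{y : Fin (k - 1) → ZMod p |
      (∏ i, (f.map (Int.castRingHom (ZMod p))).eval (y i)) *
        (f.map (Int.castRingHom (ZMod p))).eval (c - ∑ i, y i) = 0} := by
  rw [Mcount, ← Fintype.card_subtype, ← Nat.card_eq_fintype_card,
    ← Nat.card_congr (Equiv.subtypeSubtypeEquivSubtypeInter _ _)]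
  refine Nat.card_congr ((ZMod.boundedIntPiEquiv p (Fin (k - 1))).subtypeEquiv fun x => ?_)
  rw [← ZMod.intCast_zmod_eq_zero_iff_dvd]
  simp only [ZMod.boundedIntPiEquiv, Equiv.coe_fn_mk, ← Int.cast_sum, ← Int.cast_sub,
    eval_intCast_map, eq_intCast, Int.cast_prod, Int.cast_mul, Int.cast_id]

lemma card_filter_eval_prod_eq_zero_add_tupleSumCount {F : Type*} [CommRing F] [IsDomain F]
    [Fintype F] [DecidableEq F] (g : F[X]) (n : ℕ) (c : F) :
    #{y : Fin n → F | (∏ i, g.eval (y i)) * g.eval (c - ∑ i, y i) = 0} +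
        tupleSumCount ({z | g.eval z = 0} : Finset F)ᶜ (n + 1) c =
      Fintype.card F ^ n := by
  have hnonzero : {y ∈ piFinset fun _ : Fin n => ({z | g.eval z = 0} : Finset F)ᶜ |
      c - ∑ i, y i ∈ ({z | g.eval z = 0} : Finset F)ᶜ} =
        ({y | ¬((∏ i, g.eval (y i)) * g.eval (c - ∑ i, y i) = 0)} : Finset (Fin n → F)) := by
    ext y
    simp [mem_piFinset, prod_eq_zero_iff]
  rw [tupleSumCount_succ_eq_card, hnonzero, card_filter_add_card_filter_not]
  simp

lemma Mcount_add_tupleSumCount_compl (p : ℕ) [Fact p.Prime] (k : ℕ) (hk : k ≠ 0) (f : ℤ[X])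
    (c : ℤ) :
    Mcount k f c p + tupleSumCount
        ({z | (f.map (Int.castRingHom (ZMod p))).eval z = 0} : Finset (ZMod p))ᶜ k c =
      p ^ (k - 1) := by
  have h := card_filter_eval_prod_eq_zero_add_tupleSumCount
    (f.map (Int.castRingHom (ZMod p))) (k - 1) (c : ZMod p)
  rwa [← Mcount_eq_card, Nat.sub_add_cancel (Nat.one_le_iff_ne_zero.2 hk), ZMod.card] at h

lemma cast_tupleSumCount_pair_intCast (p : ℕ) {a b : ℤ} (hab : (a : ZMod p) ≠ b) (k : ℕ)
    (c : ℤ) :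
    (tupleSumCount {(a : ZMod p), (b : ZMod p)} k c : ℚ) =
      ∑ j ∈ range (k + 1),
        if (p : ℤ) ∣ (a - b) * j - (c - b * k) then (k.choose j : ℚ) else 0 := by
  rw [tupleSumCount_pair hab, Nat.cast_sum]
  refine sum_congr rfl fun j hj => ?_
  push_cast
  refine if_congr ?_ rfl rfl
  rw [← ZMod.intCast_zmod_eq_zero_iff_dvd, nsmul_eq_mul, nsmul_eq_mul,
    Nat.cast_sub (Nat.lt_succ_iff.1 (mem_range.1 hj))]
  push_cast
  constructor <;> intro h <;> linear_combination h

theorem Mcount_quadratic (p : ℕ) (hp : p.Prime) (k : ℕ) (hk : 2 ≤ k) (c : ℤ)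
    (a b : ℤ) (ha : 0 ≤ a) (ha' : a < p) (hb : 0 ≤ b) (hb' : b < p) (hab : a ≠ b) :
    (Mcount k ((X - C a) * (X - C b)) c p : ℚ) =
      (p : ℚ) ^ (k - 1) -
        ((-1 : ℚ) ^ k / p) *
          ((p : ℚ) *
            (∑ j ∈ Finset.range (k + 1),
              if (p : ℤ) ∣ ((a - b) * j - (c - b * k)) then (k.choose j : ℚ) else 0) +
            (2 - (p : ℚ)) ^ k - 2 ^ k) := by
  have : Fact p.Prime := ⟨hp⟩
  have hab' : (a : ZMod p) ≠ b := by
    rwa [Ne, ZMod.intCast_eq_intCast_iff', Int.emod_eq_of_lt ha ha', Int.emod_eq_of_lt hb hb']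
  have hroots : ({z | (((X - C a) * (X - C b)).map (Int.castRingHom (ZMod p))).eval z = 0} :
      Finset (ZMod p)) = {(a : ZMod p), (b : ZMod p)} := by
    ext z
    simp [sub_eq_zero]
  have hM := Mcount_add_tupleSumCount_compl p k (by omega) ((X - C a) * (X - C b)) c
  rw [hroots, ← Nat.cast_inj (R := ℚ), Nat.cast_add, Nat.cast_pow] at hM
  have hN := card_mul_tupleSumCount_compl (R := ℚ) {(a : ZMod p), (b : ZMod p)} k c
  rw [card_pair hab', ZMod.card, cast_tupleSumCount_pair_intCast p hab'] at hN
  have hp0 : (p : ℚ) ≠ 0 := by exact_mod_cast hp.ne_zero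
  rw [eq_sub_of_add_eq hM]
  field_simp
  push_cast at hN
  linear_combination -hN - neg_pow (2 - (p : ℚ)) k + neg_pow (2 : ℚ) k
end

section
/- Let p be a prime, let k ≥ 2 and c be integers, and let f(x) = ax + b ∈ ℤ[x] with gcd(a, p) = 1. Then 𝓜_{k,f,c}(p) = p^{k-1} − ((p−1)^k + (−1)^k δ_p)/p, where δ_p = p − 1 if p divides ac + kb, and δ_p = −1 otherwise. -/
/-!
Reducing modulo `p`, `𝓜_{k,f,c}(p)` counts the `y ∈ 𝔽_p^{k-1}` at which the product vanishes.
For `f = aX + b` with `a` invertible, the substitution `w_i = a y_i + b`, `w_k = a(c - ∑ y_i) + b`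
identifies the complementary tuples with the `k`-tuples of nonzero elements of `𝔽_p` summing to
`ac + kb`. In a finite abelian group of order `q`, let `N_k(t)` count the `k`-tuples of nonzero
elements with sum `t`. A tuple counted by `N_{k+1}(t)` is determined by its first `k` entries,
which are nonzero with sum `≠ t`, so `N_{k+1}(t) = (q-1)^k - N_k(t)`, and hence
`q N_k(t) = (q-1)^k + (-1)^k (q [t = 0] - 1)`.
-/

open Polynomial

section NonzeroTuples

variable {G : Type*} [AddCommGroup G] [Fintype G] [DecidableEq G]

def nonzeroSumEqSuccEquiv (m : ℕ) (t : G) :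
    {w : Fin (m + 1) → G // (∀ i, w i ≠ 0) ∧ ∑ i, w i = t} ≃
      {v : Fin m → G // (∀ i, v i ≠ 0) ∧ ∑ i, v i ≠ t} where
  toFun w := ⟨Fin.init w.1, fun i => w.2.1 i.castSucc, by
    have hsum := w.2.2
    rw [Fin.sum_univ_castSucc] at hsum
    intro h
    rw [show ∑ i : Fin m, w.1 i.castSucc = t from h] at hsum
    exact w.2.1 (Fin.last m) (by simpa using hsum)⟩
  invFun v := ⟨Fin.snoc v.1 (t - ∑ i, v.1 i),
    Fin.lastCases (by simpa [sub_eq_zero, eq_comm] using v.2.2) (by simpa using v.2.1),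
    by simp [Fin.sum_univ_castSucc]⟩
  left_inv w := by
    ext i
    refine Fin.lastCases ?_ (fun j => by simp [Fin.init]) i
    have hsum := w.2.2
    rw [Fin.sum_univ_castSucc] at hsum
    simp [Fin.init, ← hsum]
  right_inv v := by ext; simp [Fin.init]

theorem card_nonzero_sum_eq_succ (m : ℕ) (t : G) :
    Fintype.card {w : Fin (m + 1) → G // (∀ i, w i ≠ 0) ∧ ∑ i, w i = t} =
      Fintype.card {v : Fin m → G // (∀ i, v i ≠ 0) ∧ ∑ i, v i ≠ t} :=
  Fintype.card_congr (nonzeroSumEqSuccEquiv m t)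

theorem card_nonzero_sum_ne_add_card_nonzero_sum_eq (m : ℕ) (t : G) :
    Fintype.card {v : Fin m → G // (∀ i, v i ≠ 0) ∧ ∑ i, v i ≠ t} +
        Fintype.card {v : Fin m → G // (∀ i, v i ≠ 0) ∧ ∑ i, v i = t} =
      (Fintype.card G - 1) ^ m := by
  have hnonzero : Fintype.card {v : Fin m → G // ∀ i, v i ≠ 0} = (Fintype.card G - 1) ^ m := by
    rw [Fintype.card_congr (Equiv.subtypePiEquivPi (p := fun _ x => x ≠ 0))]
    simp [Fintype.card_subtype_compl]
  rw [← hnonzero, Fintype.card_subtype, Fintype.card_subtype, Fintype.card_subtype,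
    ← Finset.filter_filter, ← Finset.filter_filter, add_comm,
    Finset.card_filter_add_card_filter_not]

theorem card_mul_card_nonzero_sum_eq (m : ℕ) (t : G) :
    (Fintype.card G : ℤ) * Fintype.card {v : Fin m → G // (∀ i, v i ≠ 0) ∧ ∑ i, v i = t} =
      ((Fintype.card G : ℤ) - 1) ^ m +
        (-1) ^ m * (if t = 0 then (Fintype.card G : ℤ) - 1 else -1) := by
  induction m with
  | zero =>
    rcases eq_or_ne t 0 with rfl | ht
    · simp
    · simp [ht, ht.symm]
  | succ m ih =>
    have hrec := card_nonzero_sum_ne_add_card_nonzero_sum_eq m t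
    zify [Fintype.card_pos (α := G)] at hrec
    rw [card_nonzero_sum_eq_succ]
    linear_combination (Fintype.card G : ℤ) * hrec - ih

end NonzeroTuples

theorem card_affine_prod_ne_zero {F : Type*} [Field F] [Fintype F] [DecidableEq F]
    (m : ℕ) {a : F} (ha : a ≠ 0) (b c : F) :
    Fintype.card {y : Fin m → F // (∏ i, (a * y i + b)) * (a * (c - ∑ i, y i) + b) ≠ 0} =
      Fintype.card {w : Fin (m + 1) → F //
        (∀ i, w i ≠ 0) ∧ ∑ i, w i = a * c + (m + 1) * b} := by
  rw [card_nonzero_sum_eq_succ]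
  refine Fintype.card_congr (Equiv.subtypeEquiv
    (Equiv.piCongrRight fun _ => (Equiv.mulLeft₀ a ha).trans (Equiv.addRight b)) fun y => ?_)
  have hlast : a * (c - ∑ i, y i) + b = a * c + (m + 1) * b - ∑ i, (a * y i + b) := by
    simp only [Finset.sum_add_distrib, ← Finset.mul_sum, Finset.sum_const, Finset.card_univ,
      Fintype.card_fin, nsmul_eq_mul]
    ring
  rw [hlast, mul_ne_zero_iff, Finset.prod_ne_zero_iff, sub_ne_zero]
  simp [ne_comm]

def ZMod.intIcoEquiv (n : ℕ) [NeZero n] : {x : ℤ // 0 ≤ x ∧ x < n} ≃ ZMod n where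
  toFun x := x.1
  invFun y := ⟨y.val, Int.natCast_nonneg _, by exact_mod_cast y.val_lt⟩
  left_inv x := Subtype.ext <| (ZMod.val_intCast _).trans (Int.emod_eq_of_lt x.2.1 x.2.2)
  right_inv y := by simp

theorem Mcount_eq_card_zmod (k : ℕ) (f : ℤ[X]) (c : ℤ) (p : ℕ) [NeZero p] :
    Mcount k f c p = Fintype.card {y : Fin (k - 1) → ZMod p //
      (∏ i, (f.map (Int.castRingHom (ZMod p))).eval (y i)) *
        (f.map (Int.castRingHom (ZMod p))).eval (c - ∑ i, y i) = 0} := by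
  rw [Mcount, ← Nat.card_eq_fintype_card]
  refine Nat.card_congr ((Equiv.subtypeSubtypeEquivSubtypeInter _ _).symm.trans
    (Equiv.subtypeEquiv (Equiv.subtypePiEquivPi.trans
      (Equiv.piCongrRight fun _ => ZMod.intIcoEquiv p)) fun x => ?_))
  change _ ↔ (∏ i, (f.map (Int.castRingHom (ZMod p))).eval ((x.1 i : ℤ) : ZMod p)) *
    (f.map (Int.castRingHom (ZMod p))).eval ((c : ZMod p) - ∑ i, ((x.1 i : ℤ) : ZMod p)) = 0
  simp only [← ZMod.intCast_zmod_eq_zero_iff_dvd, Int.cast_mul, Int.cast_prod, ← Int.cast_sum,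
    ← Int.cast_sub, eval_intCast_map, Int.coe_castRingHom, Int.cast_id]

theorem Mcount_linear_add_card_nonzero_sum_eq (m : ℕ) (a b c : ℤ) (p : ℕ) [Fact p.Prime]
    (ha : (a : ZMod p) ≠ 0) :
    Mcount (m + 1) (C a * X + C b) c p +
      Fintype.card {w : Fin (m + 1) → ZMod p //
        (∀ i, w i ≠ 0) ∧ ∑ i, w i = a * c + (m + 1) * b} = p ^ m := by
  rw [Mcount_eq_card_zmod, ← card_affine_prod_ne_zero m ha]
  simp only [Polynomial.map_add, Polynomial.map_mul, Polynomial.map_C, Polynomial.map_X,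
    eval_add, eval_mul, eval_C, eval_X, Int.coe_castRingHom, Fintype.card_subtype_compl]
  exact (Nat.add_sub_cancel' (Fintype.card_subtype_le _)).trans (by simp)

theorem Mcount_linear (p : ℕ) (hp : p.Prime) (k : ℕ) (hk : 2 ≤ k) (c : ℤ)
    (a b : ℤ) (ha : Int.gcd a p = 1) :
    (Mcount k (C a * X + C b) c p : ℚ) =
      (p : ℚ) ^ (k - 1) -
        (((p : ℚ) - 1) ^ k +
          (-1 : ℚ) ^ k *
            (if (p : ℤ) ∣ (a * c + k * b) then (p : ℚ) - 1 else -1)) / p := by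
  have : Fact p.Prime := ⟨hp⟩
  obtain ⟨m, rfl⟩ : ∃ m, k = m + 1 := ⟨k - 1, by omega⟩
  have ha' : (a : ZMod p) ≠ 0 := ((ZMod.coe_int_isUnit_iff_isCoprime a p).mpr
    (Int.isCoprime_iff_gcd_eq_one.mpr (by rwa [Int.gcd_comm]))).ne_zero
  have ht : (a * c + (m + 1) * b : ZMod p) = 0 ↔ (p : ℤ) ∣ a * c + ((m + 1 : ℕ) : ℤ) * b := by
    rw [← ZMod.intCast_zmod_eq_zero_iff_dvd]
    push_cast
    rfl
  have hcompl := Mcount_linear_add_card_nonzero_sum_eq m a b c p ha'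
  have hcount := card_mul_card_nonzero_sum_eq (m + 1) (a * c + (m + 1) * b : ZMod p)
  simp only [ZMod.card, ht] at hcount
  qify at hcompl hcount
  have hp0 : (p : ℚ) ≠ 0 := by exact_mod_cast hp.ne_zero
  rw [Nat.add_sub_cancel, ← hcompl]
  push_cast at hcount ⊢
  rw [← hcount, mul_div_cancel_left₀ _ hp0]
  ring
end
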